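/- Let P be a tower of normal filters of height δ and G ⊆ P a generic filter (an ultrafilter on the poset meeting suitable dense sets). For X ∈ V_δ, let G_X = {S : S is F_X-positive and S ∈ G}. Then each G_X is a V-normal ultrafilter on P(X) extending F_X, and if X ⊆ Y (both in V_δ) then G_Y projects to G_X: for S ∈ G_Y, {a ∩ X : a ∈ S} ∈ G_X. -/

import Mathlib

universe u

/-- `F` is a normal filter on `𝒫(X)` for a set `X` (in the ZF universe): a proper
filter on the powerset of `X` that is fine and closed under diagonal intersections. -/
structure IsNormalFilterZ (X : ZFSet.{u}) (F : Set ZFSet.{u}) : Prop where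
  mem_sub : ∀ A ∈ F, A ⊆ X.powerset
  inter_mem : ∀ A ∈ F, ∀ B ∈ F, A ∩ B ∈ F
  superset_mem : ∀ A ∈ F, ∀ B : ZFSet.{u}, A ⊆ B → B ⊆ X.powerset → B ∈ F
  proper : (∅ : ZFSet.{u}) ∉ F
  fine : ∀ x ∈ X, ZFSet.sep (fun a => x ∈ a) X.powerset ∈ F
  normal : ∀ A : ZFSet.{u} → ZFSet.{u}, (∀ x ∈ X, A x ∈ F) →
    ZFSet.sep (fun a => ∀ x ∈ a, a ∈ A x) X.powerset ∈ F

/-- A tower of normal filters of height `δ`: each `X ∈ V_δ` (i.e. of rank `< δ`)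
carries a normal filter `F X` on `𝒫(X)`, and for `X ⊆ Y` the filter `F Y` projects
to `F X` (`B ∈ F X` iff `{a ⊆ Y : a ∩ X ∈ B} ∈ F Y`). -/
structure TowerZ (δ : Ordinal.{u}) where
  F : ZFSet.{u} → Set ZFSet.{u}
  normal : ∀ X : ZFSet.{u}, X.rank < δ → IsNormalFilterZ X (F X)
  projects : ∀ X Y : ZFSet.{u}, X.rank < δ → Y.rank < δ → X ⊆ Y →
    ∀ B : ZFSet.{u}, B ⊆ X.powerset →
      (B ∈ F X ↔ ZFSet.sep (fun a => a ∩ X ∈ B) Y.powerset ∈ F Y)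

/-- The tower ordering: `p ≤ q` iff `⋃ p ⊇ ⋃ q` and every `a ∈ p` satisfies
`a ∩ ⋃ q ∈ q`. -/
def Tle (p q : ZFSet.{u}) : Prop :=
  ZFSet.sUnion q ⊆ ZFSet.sUnion p ∧ ∀ a ∈ p, a ∩ ZFSet.sUnion q ∈ q

namespace TowerZ

variable {δ : Ordinal.{u}} (T : TowerZ δ)

/-- `S` is `F X`-positive: a subset of `𝒫(X)` whose complement in `𝒫(X)` is not
in `F X`. -/
def Pos (X S : ZFSet.{u}) : Prop :=
  S ⊆ X.powerset ∧ ZFSet.sep (fun a => a ∉ S) X.powerset ∉ T.F X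

/-- The conditions of the tower: the sets in `V_δ` positive for some `F X`. -/
def Cond (S : ZFSet.{u}) : Prop :=
  ∃ X : ZFSet.{u}, X.rank < δ ∧ T.Pos X S

/-- Compatibility in the tower ordering. -/
def Compat (p q : ZFSet.{u}) : Prop :=
  ∃ r : ZFSet.{u}, T.Cond r ∧ Tle r p ∧ Tle r q

/-- `A` is a maximal antichain of the tower. -/
def MaxAC (A : Set ZFSet.{u}) : Prop :=
  (∀ p ∈ A, T.Cond p) ∧ (∀ p ∈ A, ∀ q ∈ A, p ≠ q → ¬ T.Compat p q) ∧
  (∀ p : ZFSet.{u}, T.Cond p → ∃ q ∈ A, T.Compat p q)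

/-- `G` is a generic filter on the tower: a filter on the poset of conditions
meeting every maximal antichain (of the ground model). -/
def Generic (G : Set ZFSet.{u}) : Prop :=
  (∀ p ∈ G, T.Cond p) ∧
  (∀ p ∈ G, ∀ q : ZFSet.{u}, T.Cond q → Tle p q → q ∈ G) ∧
  (∀ p ∈ G, ∀ q ∈ G, ∃ r ∈ G, Tle r p ∧ Tle r q) ∧
  (∀ A : Set ZFSet.{u}, T.MaxAC A → ∃ p ∈ A, p ∈ G)

/-- `p` forces `q ∈ G`: every condition below `p` is compatible with `q`. -/
def Forces (p q : ZFSet.{u}) : Prop :=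
  ∀ r : ZFSet.{u}, T.Cond r → Tle r p → T.Compat r q

end TowerZ

/-- `p` and `q` are disjoint conditions: for any `Z ∈ V_δ` containing `⋃ p` and
`⋃ q`, no `a ⊆ Z` satisfies both `a ∩ ⋃ p ∈ p` and `a ∩ ⋃ q ∈ q`. -/
def Disj (δ : Ordinal.{u}) (p q : ZFSet.{u}) : Prop :=
  ∀ Z : ZFSet.{u}, Z.rank < δ → ZFSet.sUnion p ⊆ Z → ZFSet.sUnion q ⊆ Z →
    ∀ a ∈ Z.powerset, ¬ (a ∩ ZFSet.sUnion p ∈ p ∧ a ∩ ZFSet.sUnion q ∈ q)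

/-- The generic ultrafilter on `𝒫(X)` induced by a generic `G`:
`G_X = {S ∈ I⁺_{F_X} : S ∈ G}`. -/
def TowerZ.GX {δ : Ordinal.{u}} (T : TowerZ δ) (G : Set ZFSet.{u}) (X : ZFSet.{u}) :
    Set ZFSet.{u} :=
  {S : ZFSet.{u} | T.Pos X S ∧ S ∈ G}

/-!
A condition `r` lies below an `F_X`-positive set `S` exactly when `⋃ r ⊇ X` and every `a ∈ r`
has its trace `a ∩ X` in `S`; and the projection property of the tower pushes positivity forward
along traces. Hence `G_X` is upward closed, closed under intersections, and `G_Y` projects to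
`G_X`. The remaining properties come from genericity. Given `S ⊆ 𝒫(X)` and a condition `p`, lift
both to `⋃ p ∪ X`: the lift of `p` splits into the part tracing into `S` and the part tracing into
its complement, and one of them is positive, so `p` is compatible with `S` or with `𝒫(X) ∖ S`;
thus `G` meets the maximal antichain `{S, 𝒫(X) ∖ S}`. Given a choice function `f` on `S ∈ G`,
normality of `F_{⋃ r}` (pressing down `a ↦ f (a ∩ X)`) shows that every `r ≤ S` is compatible with
a positive fibre `{a ∈ S : f a = x}`, so `G` meets the antichain of positive fibres.
-/

open ZFSet

namespace ZFSet

theorem sUnion_subset_of_subset_powerset {p X : ZFSet.{u}} (h : p ⊆ X.powerset) : ⋃₀ p ⊆ X := by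
  intro x hx
  obtain ⟨a, ha, hxa⟩ := mem_sUnion.1 hx
  exact mem_powerset.1 (h ha) hxa

theorem powerset_sdiff_sdiff {X S : ZFSet.{u}} (h : S ⊆ X.powerset) :
    X.powerset \ (X.powerset \ S) = S := by
  ext a
  simp only [mem_sdiff, not_and, not_not]
  exact ⟨fun ha => ha.2 ha.1, fun ha => ⟨h ha, fun _ => ha⟩⟩

theorem inter_subset_right {a b : ZFSet.{u}} : a ∩ b ⊆ b := fun _ h => (mem_inter.1 h).2

theorem sdiff_subset {a b : ZFSet.{u}} : a \ b ⊆ a := fun _ h => (mem_sdiff.1 h).1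

end ZFSet

theorem Tle.refl (p : ZFSet.{u}) : Tle p p :=
  ⟨fun _ h => h, fun a ha => by
    rwa [inter_eq_left_of_subset fun _ hx => mem_sUnion_of_mem hx ha]⟩

theorem Tle.trans {p q s : ZFSet.{u}} (hpq : Tle p q) (hqs : Tle q s) : Tle p s := by
  refine ⟨fun x hx => hpq.1 (hqs.1 hx), fun a ha => ?_⟩
  have h := hqs.2 _ (hpq.2 a ha)
  have he : a ∩ ⋃₀ q ∩ ⋃₀ s = a ∩ ⋃₀ s := by
    ext x
    simp only [mem_inter]
    exact ⟨fun h => ⟨h.1.1, h.2⟩, fun h => ⟨⟨h.1, hqs.1 h.2⟩, h.2⟩⟩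
  rwa [he] at h

theorem Tle.of_trace {r S X : ZFSet.{u}} (hS : S ⊆ X.powerset) (hXr : X ⊆ ⋃₀ r)
    (htr : ∀ a ∈ r, a ∩ X ∈ S) : Tle r S := by
  have hSX := sUnion_subset_of_subset_powerset hS
  refine ⟨fun x hx => hXr (hSX hx), fun a ha => ?_⟩
  have he : a ∩ ⋃₀ S = a ∩ X := by
    ext x
    simp only [mem_inter]
    exact ⟨fun h => ⟨h.1, hSX h.2⟩, fun h => ⟨h.1, mem_sUnion_of_mem (mem_inter.2 h) (htr a ha)⟩⟩
  rw [he]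
  exact htr a ha

theorem Tle.trace {r S X : ZFSet.{u}} (h : Tle r S) (hS : ⋃₀ S = X) :
    X ⊆ ⋃₀ r ∧ ∀ a ∈ r, a ∩ X ∈ S := by
  subst hS
  exact h

namespace IsNormalFilterZ

variable {X : ZFSet.{u}} {F : Set ZFSet.{u}}

theorem powerset_mem (hF : IsNormalFilterZ X F) : X.powerset ∈ F := by
  have h := hF.normal _ hF.fine
  have he : X.powerset.sep (fun a => ∀ x ∈ a, a ∈ X.powerset.sep (x ∈ ·)) = X.powerset := by
    ext a
    simp only [mem_sep]
    exact ⟨fun h => h.1, fun h => ⟨h, fun _ hx => ⟨h, hx⟩⟩⟩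
  rwa [he] at h

theorem exists_mem_of_sdiff_notMem (hF : IsNormalFilterZ X F) {S C : ZFSet.{u}}
    (hS : X.powerset \ S ∉ F) (hC : C ∈ F) : ∃ a ∈ S, a ∈ C := by
  by_contra! h
  refine hS (hF.superset_mem C hC _ (fun a ha => ?_) sdiff_subset)
  exact mem_sdiff.2 ⟨hF.mem_sub C hC ha, fun haS => h a haS ha⟩

theorem sdiff_notMem_or_of_subset_union (hF : IsNormalFilterZ X F) {A B C : ZFSet.{u}}
    (hC : X.powerset \ C ∉ F) (hCAB : C ⊆ A ∪ B) :
    X.powerset \ A ∉ F ∨ X.powerset \ B ∉ F := by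
  by_contra! h
  refine hC (hF.superset_mem _ (hF.inter_mem _ h.1 _ h.2) _ (fun a ha => ?_) sdiff_subset)
  simp only [mem_inter, mem_sdiff] at ha
  refine mem_sdiff.2 ⟨ha.1.1, fun haC => ?_⟩
  rcases mem_union.1 (hCAB haC) with h | h
  exacts [ha.1.2 h, ha.2.2 h]

theorem pressing_down (hF : IsNormalFilterZ X F) {r : ZFSet.{u}} {g : ZFSet.{u} → ZFSet.{u}}
    (hr : X.powerset \ r ∉ F) (hg : ∀ a ∈ r, g a ∈ a) :
    ∃ x, X.powerset \ r.sep (fun a => g a = x) ∉ F := by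
  by_contra! h
  obtain ⟨a, har, had⟩ := hF.exists_mem_of_sdiff_notMem hr (hF.normal _ fun x _ => h x)
  have := (mem_sep.1 had).2 _ (hg a har)
  exact (mem_sdiff.1 this).2 (mem_sep.2 ⟨har, rfl⟩)

end IsNormalFilterZ

def Tmeet (p X S : ZFSet.{u}) : ZFSet.{u} :=
  (⋃₀ p ∪ X).powerset.sep fun a => a ∩ ⋃₀ p ∈ p ∧ a ∩ X ∈ S

namespace TowerZ

variable {δ : Ordinal.{u}} (T : TowerZ δ)

theorem sUnion_eq_of_pos {X S : ZFSet.{u}} (hX : X.rank < δ) (hS : T.Pos X S) : ⋃₀ S = X := by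
  refine le_antisymm (sUnion_subset_of_subset_powerset hS.1) fun x hx => ?_
  obtain ⟨a, haS, hxa⟩ :=
    (T.normal X hX).exists_mem_of_sdiff_notMem hS.2 ((T.normal X hX).fine x hx)
  exact mem_sUnion_of_mem (mem_sep.1 hxa).2 haS

theorem cond_iff_pos_sUnion {p : ZFSet.{u}} : T.Cond p ↔ (⋃₀ p).rank < δ ∧ T.Pos (⋃₀ p) p := by
  refine ⟨fun ⟨X, hX, hpX⟩ => ?_, fun h => ⟨_, h⟩⟩
  rw [T.sUnion_eq_of_pos hX hpX]
  exact ⟨hX, hpX⟩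

variable {T} in
theorem Compat.symm {p q : ZFSet.{u}} (h : T.Compat p q) : T.Compat q p :=
  let ⟨r, hr, hrp, hrq⟩ := h
  ⟨r, hr, hrq, hrp⟩

theorem pos_of_trace {X W r S : ZFSet.{u}} (hX : X.rank < δ) (hW : W.rank < δ) (hXW : X ⊆ W)
    (hr : T.Pos W r) (hS : S ⊆ X.powerset) (htr : ∀ a ∈ r, a ∩ X ∈ S) : T.Pos X S := by
  refine ⟨hS, fun hc => hr.2 ?_⟩
  refine (T.normal W hW).superset_mem _ ((T.projects X W hX hW hXW _ sep_subset).1 hc) _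
    (fun a ha => ?_) sep_subset
  simp only [mem_sep] at ha ⊢
  exact ⟨ha.1, fun har => ha.2.2 (htr a har)⟩

theorem pos_lift {Z W p : ZFSet.{u}} (hZ : Z.rank < δ) (hW : W.rank < δ) (hZW : Z ⊆ W)
    (hp : T.Pos Z p) : T.Pos W (W.powerset.sep fun a => a ∩ Z ∈ p) := by
  refine ⟨sep_subset, fun hc => hp.2 ((T.projects Z W hZ hW hZW _ sep_subset).2 ?_)⟩
  convert hc using 1
  ext a
  simp only [mem_sep, mem_powerset]
  exact ⟨fun h => ⟨h.1, fun h' => h.2.2 h'.2⟩,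
    fun h => ⟨h.1, inter_subset_right, fun h' => h.2 ⟨h.1, h'⟩⟩⟩

theorem not_compat_of_disjoint {X p q : ZFSet.{u}} (hX : X.rank < δ) (hp : T.Pos X p)
    (hq : T.Pos X q) (hpq : ∀ a ∈ p, a ∉ q) : ¬ T.Compat p q := by
  rintro ⟨r, hr, hrp, hrq⟩
  obtain ⟨hW, hrW⟩ := T.cond_iff_pos_sUnion.1 hr
  obtain ⟨a, ha, -⟩ :=
    (T.normal _ hW).exists_mem_of_sdiff_notMem hrW.2 (T.normal _ hW).powerset_mem
  exact hpq _ ((hrp.trace (T.sUnion_eq_of_pos hX hp)).2 a ha)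
    ((hrq.trace (T.sUnion_eq_of_pos hX hq)).2 a ha)

theorem pos_and_compat_of_pos_meet {p X S : ZFSet.{u}} (hp : T.Cond p) (hX : X.rank < δ)
    (hS : S ⊆ X.powerset) (hM : T.Pos (⋃₀ p ∪ X) (Tmeet p X S)) :
    T.Pos X S ∧ T.Compat p S := by
  obtain ⟨hZ, hpZ⟩ := T.cond_iff_pos_sUnion.1 hp
  have hW : (⋃₀ p ∪ X).rank < δ := (rank_union _ _).trans_lt (max_lt hZ hX)
  have hMW := T.sUnion_eq_of_pos hW hM
  have hXW : X ⊆ ⋃₀ p ∪ X := fun _ hx => mem_union.2 (.inr hx)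
  refine ⟨T.pos_of_trace hX hW hXW hM hS fun a ha => (mem_sep.1 ha).2.2,
    Tmeet p X S, ⟨_, hW, hM⟩, ?_, ?_⟩
  · exact Tle.of_trace hpZ.1 (hMW ▸ fun _ hx => mem_union.2 (.inl hx))
      fun a ha => (mem_sep.1 ha).2.1
  · exact Tle.of_trace hS (hMW ▸ hXW) fun a ha => (mem_sep.1 ha).2.2

theorem compat_or_compat_compl {p X S : ZFSet.{u}} (hp : T.Cond p) (hX : X.rank < δ)
    (hS : S ⊆ X.powerset) :
    (T.Pos X S ∧ T.Compat p S) ∨ (T.Pos X (X.powerset \ S) ∧ T.Compat p (X.powerset \ S)) := by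
  obtain ⟨hZ, hpZ⟩ := T.cond_iff_pos_sUnion.1 hp
  have hW : (⋃₀ p ∪ X).rank < δ := (rank_union _ _).trans_lt (max_lt hZ hX)
  have hlift := T.pos_lift hZ hW (fun _ hx => mem_union.2 (.inl hx)) hpZ
  have hsplit : (⋃₀ p ∪ X).powerset.sep (fun a => a ∩ ⋃₀ p ∈ p) ⊆
      Tmeet p X S ∪ Tmeet p X (X.powerset \ S) := by
    intro a ha
    obtain ⟨haW, hap⟩ := mem_sep.1 ha
    by_cases haS : a ∩ X ∈ S
    · exact mem_union.2 (.inl (mem_sep.2 ⟨haW, hap, haS⟩))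
    · exact mem_union.2
        (.inr (mem_sep.2 ⟨haW, hap, mem_sdiff.2 ⟨mem_powerset.2 inter_subset_right, haS⟩⟩))
  exact ((T.normal _ hW).sdiff_notMem_or_of_subset_union hlift.2 hsplit).imp
    (fun h => T.pos_and_compat_of_pos_meet hp hX hS ⟨sep_subset, h⟩)
    (fun h => T.pos_and_compat_of_pos_meet hp hX sdiff_subset ⟨sep_subset, h⟩)

theorem exists_compat_fiber {X S r : ZFSet.{u}} {f : ZFSet.{u} → ZFSet.{u}} (hX : X.rank < δ)
    (hS : T.Pos X S) (hf : ∀ a ∈ S, f a ∈ a) (hr : T.Cond r) (hrS : Tle r S) :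
    ∃ x ∈ X, T.Pos X (S.sep (f · = x)) ∧ T.Compat r (S.sep (f · = x)) := by
  obtain ⟨hW, hrW⟩ := T.cond_iff_pos_sUnion.1 hr
  obtain ⟨hXW, htr⟩ := hrS.trace (T.sUnion_eq_of_pos hX hS)
  have hfX : ∀ a ∈ r, f (a ∩ X) ∈ a ∩ X := fun a ha => hf _ (htr a ha)
  obtain ⟨x, hx⟩ := (T.normal _ hW).pressing_down (g := fun a => f (a ∩ X)) hrW.2
    fun a ha => (mem_inter.1 (hfX a ha)).1
  have hrx : T.Pos (⋃₀ r) (r.sep fun a => f (a ∩ X) = x) := ⟨fun a ha => hrW.1 (mem_sep.1 ha).1, hx⟩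
  obtain ⟨a, ha, -⟩ := (T.normal _ hW).exists_mem_of_sdiff_notMem hx (T.normal _ hW).powerset_mem
  obtain ⟨har, rfl⟩ := mem_sep.1 ha
  have hSx : S.sep (f · = f (a ∩ X)) ⊆ X.powerset := fun b hb => hS.1 (mem_sep.1 hb).1
  have htrx : ∀ b ∈ r.sep fun a' => f (a' ∩ X) = f (a ∩ X), b ∩ X ∈ S.sep (f · = f (a ∩ X)) :=
    fun b hb => mem_sep.2 ⟨htr b (mem_sep.1 hb).1, (mem_sep.1 hb).2⟩
  have hrxW := T.sUnion_eq_of_pos hW hrx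
  refine ⟨_, (mem_inter.1 (hfX a har)).2, T.pos_of_trace hX hW hXW hrx hSx htrx, _,
    ⟨_, hW, hrx⟩, ?_, Tle.of_trace hSx (hrxW ▸ hXW) htrx⟩
  refine Tle.of_trace hrW.1 hrxW.symm.subset fun b hb => ?_
  rw [inter_eq_left_of_subset (mem_powerset.1 (hrW.1 (mem_sep.1 hb).1))]
  exact (mem_sep.1 hb).1

theorem exists_maxAC_superset {B : Set ZFSet.{u}} (hBc : ∀ p ∈ B, T.Cond p)
    (hBa : ∀ p ∈ B, ∀ q ∈ B, p ≠ q → ¬ T.Compat p q) : ∃ A, B ⊆ A ∧ T.MaxAC A := by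
  let R : {p // T.Cond p} → {p // T.Cond p} → Prop := fun p q => ¬ T.Compat p q
  have hB : IsChain R {p | p.1 ∈ B} := fun p hp q hq hne =>
    .inl (hBa _ hp _ hq (Subtype.coe_ne_coe.2 hne))
  obtain ⟨M, hM, hBM⟩ := hB.exists_maxChain
  refine ⟨Subtype.val '' M, fun p hp => ⟨⟨p, hBc p hp⟩, hBM hp, rfl⟩, ?_, ?_, fun p hp => ?_⟩
  · rintro _ ⟨p, -, rfl⟩
    exact p.2
  · rintro _ ⟨p, hp, rfl⟩ _ ⟨q, hq, rfl⟩ hne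
    exact (hM.1 hp hq (ne_of_apply_ne _ hne)).elim id (mt Compat.symm)
  · by_contra! h
    have hins : IsChain R (insert ⟨p, hp⟩ M) :=
      hM.1.insert fun q hq _ => .inl (h q ⟨q, hq, rfl⟩)
    have hpM : ⟨p, hp⟩ ∈ M := (hM.2 hins (Set.subset_insert _ _)) ▸ Set.mem_insert _ _
    exact h p ⟨_, hpM, rfl⟩ ⟨p, hp, Tle.refl p, Tle.refl p⟩

namespace Generic

variable {T} {G : Set ZFSet.{u}} (hG : T.Generic G)
include hG

theorem exists_mem_of_predense_below {S : ZFSet.{u}} {B : Set ZFSet.{u}} (hS : S ∈ G)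
    (hBc : ∀ p ∈ B, T.Cond p) (hBa : ∀ p ∈ B, ∀ q ∈ B, p ≠ q → ¬ T.Compat p q)
    (hB : ∀ r, T.Cond r → Tle r S → ∃ q ∈ B, T.Compat r q) : ∃ q ∈ B, q ∈ G := by
  obtain ⟨hGc, -, hGdir, hGmeet⟩ := hG
  obtain ⟨A, hBA, hA⟩ := T.exists_maxAC_superset hBc hBa
  obtain ⟨p, hpA, hpG⟩ := hGmeet A hA
  obtain ⟨r, hrG, hrp, hrS⟩ := hGdir p hpG S hS
  obtain ⟨q, hqB, r', hr', hr'r, hr'q⟩ := hB r (hGc r hrG) hrS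
  obtain rfl : p = q := by_contra fun hne =>
    hA.2.1 p hpA q (hBA hqB) hne ⟨r', hr', hr'r.trans hrp, hr'q⟩
  exact ⟨p, hqB, hpG⟩

theorem mem_GX_of_trace {X r S : ZFSet.{u}} (hX : X.rank < δ) (hr : r ∈ G) (hXr : X ⊆ ⋃₀ r)
    (hS : S ⊆ X.powerset) (htr : ∀ a ∈ r, a ∩ X ∈ S) : S ∈ T.GX G X := by
  obtain ⟨hW, hrW⟩ := T.cond_iff_pos_sUnion.1 (hG.1 r hr)
  have hSX := T.pos_of_trace hX hW hXr hrW hS htr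
  exact ⟨hSX, hG.2.1 r hr S ⟨X, hX, hSX⟩ (Tle.of_trace hS hXr htr)⟩

theorem mem_GX_or_compl_mem_GX {X S : ZFSet.{u}} (hX : X.rank < δ) (hS : S ⊆ X.powerset) :
    S ∈ T.GX G X ∨ X.powerset \ S ∈ T.GX G X := by
  have hdisj : ∀ a ∈ S, a ∉ X.powerset \ S := fun a ha h => (mem_sdiff.1 h).2 ha
  have hmax : T.MaxAC {q | (q = S ∨ q = X.powerset \ S) ∧ T.Pos X q} := by
    refine ⟨fun q hq => ⟨X, hX, hq.2⟩, ?_, fun p hp => ?_⟩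
    · rintro p ⟨rfl | rfl, hp⟩ q ⟨rfl | rfl, hq⟩ hne
      · exact absurd rfl hne
      · exact T.not_compat_of_disjoint hX hp hq hdisj
      · exact fun h => T.not_compat_of_disjoint hX hq hp hdisj h.symm
      · exact absurd rfl hne
    · rcases T.compat_or_compat_compl hp hX hS with ⟨hpos, hc⟩ | ⟨hpos, hc⟩
      exacts [⟨S, ⟨.inl rfl, hpos⟩, hc⟩, ⟨_, ⟨.inr rfl, hpos⟩, hc⟩]
  obtain ⟨q, ⟨rfl | rfl, hq⟩, hqG⟩ := hG.2.2.2 _ hmax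
  exacts [.inl ⟨hq, hqG⟩, .inr ⟨hq, hqG⟩]

theorem mem_GX_of_mem {X C : ZFSet.{u}} (hX : X.rank < δ) (hC : C ∈ T.F X) : C ∈ T.GX G X := by
  have hCX := (T.normal X hX).mem_sub C hC
  refine (hG.mem_GX_or_compl_mem_GX hX hCX).resolve_right fun h => h.1.2 ?_
  change X.powerset \ (X.powerset \ C) ∈ T.F X
  rwa [powerset_sdiff_sdiff hCX]

theorem exists_sep_eq_mem_GX {X S : ZFSet.{u}} (hX : X.rank < δ) (hS : S ∈ T.GX G X)
    {f : ZFSet.{u} → ZFSet.{u}} (hf : ∀ a ∈ S, f a ∈ a) :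
    ∃ x ∈ X, S.sep (f · = x) ∈ T.GX G X := by
  let B : Set ZFSet.{u} := {q | ∃ x ∈ X, q = S.sep (f · = x) ∧ T.Pos X q}
  have hBa : ∀ p ∈ B, ∀ q ∈ B, p ≠ q → ¬ T.Compat p q := by
    rintro _ ⟨x, -, rfl, hpx⟩ _ ⟨y, -, rfl, hqy⟩ hne
    refine T.not_compat_of_disjoint hX hpx hqy fun a ha hb => hne ?_
    rw [← (mem_sep.1 ha).2, ← (mem_sep.1 hb).2]
  have hB : ∀ r, T.Cond r → Tle r S → ∃ q ∈ B, T.Compat r q := fun r hr hrS =>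
    let ⟨x, hx, hpos, hc⟩ := T.exists_compat_fiber hX hS.1 hf hr hrS
    ⟨_, ⟨x, hx, rfl, hpos⟩, hc⟩
  have hBc : ∀ q ∈ B, T.Cond q := by
    rintro _ ⟨x, -, rfl, hq⟩
    exact ⟨X, hX, hq⟩
  obtain ⟨_, ⟨x, hx, rfl, hq⟩, hqG⟩ := hG.exists_mem_of_predense_below hS.2 hBc hBa hB
  exact ⟨x, hx, hq, hqG⟩

end Generic

end TowerZ

theorem stmt13_general (δ : Ordinal.{u}) (T : TowerZ δ)
    (G : Set ZFSet.{u}) (hG : T.Generic G) :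
    (∀ X : ZFSet.{u}, X.rank < δ →
      -- G_X extends F_X
      (∀ C ∈ T.F X, C ∈ T.GX G X) ∧
      -- G_X is a proper filter on 𝒫(X)
      ((∅ : ZFSet.{u}) ∉ T.GX G X) ∧
      (∀ S ∈ T.GX G X, ∀ S' ∈ T.GX G X, S ∩ S' ∈ T.GX G X) ∧
      (∀ S ∈ T.GX G X, ∀ S' : ZFSet.{u}, S ⊆ S' → S' ⊆ X.powerset → S' ∈ T.GX G X) ∧
      -- G_X is an ultrafilter on 𝒫(X)
      (∀ S : ZFSet.{u}, S ⊆ X.powerset →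
        (S ∈ T.GX G X ∨ ZFSet.sep (fun a => a ∉ S) X.powerset ∈ T.GX G X)) ∧
      -- G_X is fine
      (∀ x ∈ X, ZFSet.sep (fun a => x ∈ a) X.powerset ∈ T.GX G X) ∧
      -- G_X is V-normal: choice functions are constant on a set in G_X
      (∀ S ∈ T.GX G X, ∀ f : ZFSet.{u} → ZFSet.{u}, (∀ a ∈ S, f a ∈ a) →
        ∃ x ∈ X, ZFSet.sep (fun a => f a = x) S ∈ T.GX G X)) ∧
    -- projection
    (∀ X Y : ZFSet.{u}, X.rank < δ → Y.rank < δ → X ⊆ Y →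
      ∀ S ∈ T.GX G Y,
        ZFSet.sep (fun b => ∃ a ∈ S, b = a ∩ X) X.powerset ∈ T.GX G X) := by
  refine ⟨fun X hX => ⟨fun C hC => hG.mem_GX_of_mem hX hC, ?_, ?_, ?_,
    fun S hS => hG.mem_GX_or_compl_mem_GX hX hS,
    fun x hx => hG.mem_GX_of_mem hX ((T.normal X hX).fine x hx),
    fun S hS f hf => hG.exists_sep_eq_mem_GX hX hS hf⟩, ?_⟩
  · rintro ⟨h, -⟩
    refine h.2 ?_
    convert (T.normal X hX).powerset_mem using 1
    ext a
    simp
  · rintro S ⟨hS, hSG⟩ S' ⟨hS', hS'G⟩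
    obtain ⟨r, hrG, hrS, hrS'⟩ := hG.2.2.1 S hSG S' hS'G
    obtain ⟨hXr, htr⟩ := hrS.trace (T.sUnion_eq_of_pos hX hS)
    exact hG.mem_GX_of_trace hX hrG hXr (fun b hb => hS.1 (mem_inter.1 hb).1) fun a ha =>
      mem_inter.2 ⟨htr a ha, (hrS'.trace (T.sUnion_eq_of_pos hX hS')).2 a ha⟩
  · rintro S ⟨hS, hSG⟩ S' hSS' hS'
    refine hG.mem_GX_of_trace hX hSG (T.sUnion_eq_of_pos hX hS).symm.subset hS' fun a ha => ?_
    rw [inter_eq_left_of_subset (mem_powerset.1 (hS.1 ha))]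
    exact hSS' ha
  · rintro X Y hX hY hXY S ⟨hS, hSG⟩
    exact hG.mem_GX_of_trace hX hSG (hXY.trans (T.sUnion_eq_of_pos hY hS).symm.subset) sep_subset
      fun a ha => mem_sep.2 ⟨mem_powerset.2 inter_subset_right, a, ha, rfl⟩

/-- Let `P` be a tower of height `δ` (`δ` a limit ordinal) and `G ⊆ P` generic.
Then for each `X ∈ V_δ`, `G_X = {S F_X-positive : S ∈ G}` is a `V`-normal
ultrafilter on `𝒫(X)` extending `F_X`, and if `X ⊆ Y` then `G_Y` projects to `G_X`:
for `S ∈ G_Y`, `{a ∩ X : a ∈ S} ∈ G_X`. -/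
theorem stmt13 (δ : Ordinal.{u}) (hδ : Order.IsSuccLimit δ) (T : TowerZ δ)
    (G : Set ZFSet.{u}) (hG : T.Generic G) :
    (∀ X : ZFSet.{u}, X.rank < δ →
      -- G_X extends F_X
      (∀ C ∈ T.F X, C ∈ T.GX G X) ∧
      -- G_X is a proper filter on 𝒫(X)
      ((∅ : ZFSet.{u}) ∉ T.GX G X) ∧
      (∀ S ∈ T.GX G X, ∀ S' ∈ T.GX G X, S ∩ S' ∈ T.GX G X) ∧
      (∀ S ∈ T.GX G X, ∀ S' : ZFSet.{u}, S ⊆ S' → S' ⊆ X.powerset → S' ∈ T.GX G X) ∧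
      -- G_X is an ultrafilter on 𝒫(X)
      (∀ S : ZFSet.{u}, S ⊆ X.powerset →
        (S ∈ T.GX G X ∨ ZFSet.sep (fun a => a ∉ S) X.powerset ∈ T.GX G X)) ∧
      -- G_X is fine
      (∀ x ∈ X, ZFSet.sep (fun a => x ∈ a) X.powerset ∈ T.GX G X) ∧
      -- G_X is V-normal: choice functions are constant on a set in G_X
      (∀ S ∈ T.GX G X, ∀ f : ZFSet.{u} → ZFSet.{u}, (∀ a ∈ S, f a ∈ a) →
        ∃ x ∈ X, ZFSet.sep (fun a => f a = x) S ∈ T.GX G X)) ∧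
    -- projection
    (∀ X Y : ZFSet.{u}, X.rank < δ → Y.rank < δ → X ⊆ Y →
      ∀ S ∈ T.GX G Y,
        ZFSet.sep (fun b => ∃ a ∈ S, b = a ∩ X) X.powerset ∈ T.GX G X) :=
  stmt13_general δ T G hG
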